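/- Deterministic comparison step of the verification theorem: let $T > 0$, let $v : [0,T]\times\mathbb{R}^n \to \mathbb{R}$ be continuous, let $x^* : [0,T] \to \mathbb{R}^n$ be continuous, and set $g(t) = v(t, x^*(t))$. Suppose $g$ is continuous on $[0,T]$, its right difference quotients are dominated: $(g(t+h)-g(t))/h \le \rho(t)$ for a.e. $t$ and $0 < h \le h_0$ with $\rho \in L^1$, and suppose $\limsup_{h\to 0^+}\frac{g(t+h)-g(t)}{h} \le -f(t)$ for a.e. $t \in [s,T]$, where $f \in L^1(s,T)$. Then $v(s, x^*(s)) \ge v(T, x^*(T)) + \int_s^T f(t)\,dt$. -/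

import Mathlib

/-!
For continuous `g`, the integral over `[a, b]` of the difference quotient
`q_h t = (g (t + h) - g t) / h` telescopes into two averages of `g` over intervals of length `h`,
so it tends to `g b - g a` as `h → 0`. Along a sequence `h_k ↓ 0` the functions `ρ - q_{h_k}` are
nonnegative and their lower limit is at least `ρ - f'`, where `f'` bounds the upper right Dini
derivative; Fatou's lemma then gives `∫ (ρ - f') ≤ ∫ ρ - (g b - g a)`.
-/

open Filter MeasureTheory Set Topology

theorem continuous_of_continuousOn_Icc_of_eq_endpoints {g : ℝ → ℝ} {a b : ℝ} (hab : a ≤ b)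
    (hg : ContinuousOn g (Icc a b)) (hlt : ∀ t, t < a → g t = g a)
    (hgt : ∀ t, b < t → g t = g b) : Continuous g := by
  have hg_eq : (fun t => g (projIcc a b hab t)) = g := by
    funext t
    rcases lt_or_ge t a with hta | hat
    · simp [projIcc_of_le_left hab hta.le, hlt t hta]
    rcases le_or_gt t b with htb | hbt
    · simp [projIcc_of_mem hab ⟨hat, htb⟩]
    · simp [projIcc_of_right_le hab hbt.le, hgt t hbt]
  exact hg_eq ▸ hg.comp_continuous (continuous_subtype_val.comp continuous_projIcc)
    fun t => (projIcc a b hab t).2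

theorem Continuous.tendsto_intervalIntegral_slope {g : ℝ → ℝ} (hg : Continuous g) (a b : ℝ) :
    Tendsto (fun h => ∫ t in a..b, (g (t + h) - g t) / h) (𝓝[≠] 0) (𝓝 (g b - g a)) := by
  set G : ℝ → ℝ := fun x => ∫ t in (0 : ℝ)..x, g t
  have hG : ∀ x, HasDerivAt G (g x) x := fun x => (hg.integral_hasStrictDerivAt 0 x).hasDerivAt
  have hG_sub : ∀ x y, ∫ t in x..y, g t = G y - G x := fun x y =>
    (intervalIntegral.integral_interval_sub_left (hg.intervalIntegrable 0 y)
      (hg.intervalIntegrable 0 x)).symm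
  have hquot : ∀ h, ∫ t in a..b, (g (t + h) - g t) / h =
      h⁻¹ • (G (b + h) - G b) - h⁻¹ • (G (a + h) - G a) := by
    intro h
    have hshift : IntervalIntegrable (fun t => g (t + h)) volume a b :=
      (hg.comp (continuous_add_const h)).intervalIntegrable a b
    rw [intervalIntegral.integral_div,
      intervalIntegral.integral_sub hshift (hg.intervalIntegrable a b),
      intervalIntegral.integral_comp_add_right, hG_sub, hG_sub, smul_eq_mul, smul_eq_mul]
    ring
  simpa only [hquot] using (hG b).tendsto_slope_zero.sub (hG a).tendsto_slope_zero

section Fatou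

variable {α : Type*} [MeasurableSpace α] {μ : Measure α}

theorem integral_le_toReal_lintegral_ofReal (f : α → ℝ) :
    ∫ x, f x ∂μ ≤ (∫⁻ x, ENNReal.ofReal (f x) ∂μ).toReal := by
  by_cases hf : Integrable f μ
  · rw [integral_eq_lintegral_pos_part_sub_lintegral_neg_part hf]
    exact sub_le_self _ ENNReal.toReal_nonneg
  · rw [integral_undef hf]
    exact ENNReal.toReal_nonneg

theorem integral_le_of_le_liminf_of_tendsto_integral {ι : Type*} {l : Filter ι}
    [l.IsCountablyGenerated] [l.NeBot] {ψ : ι → α → ℝ} {u : α → ℝ} {L : ℝ}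
    (hψ : ∀ i, Integrable (ψ i) μ) (hψ_nonneg : ∀ i, 0 ≤ᵐ[μ] ψ i)
    -- `u x ≤ liminf ψ i x`, stated so as to avoid the junk value of `liminf` for sequences
    -- that are unbounded above in `ℝ`
    (hu : ∀ᵐ x ∂μ, ∀ c < u x, ∀ᶠ i in l, c < ψ i x)
    (hL : Tendsto (fun i => ∫ x, ψ i x ∂μ) l (𝓝 L)) :
    ∫ x, u x ∂μ ≤ L := by
  have hL_nonneg : 0 ≤ L :=
    ge_of_tendsto hL (Eventually.of_forall fun i => integral_nonneg_of_ae (hψ_nonneg i))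
  have hpt : ∀ᵐ x ∂μ, ENNReal.ofReal (u x) ≤ liminf (fun i => ENNReal.ofReal (ψ i x)) l := by
    filter_upwards [hu] with x hx
    refine le_of_forall_lt_imp_le_of_dense fun d hd => ?_
    refine le_liminf_of_le (u := fun i => ENNReal.ofReal (ψ i x)) (by isBoundedDefault) ?_
    filter_upwards [hx _ ((ENNReal.lt_ofReal_iff_toReal_lt hd.ne_top).1 hd)] with i hi
    exact (ENNReal.le_ofReal_iff_toReal_le hd.ne_top (hi.le.trans' ENNReal.toReal_nonneg)).2 hi.le
  have hlint : ∫⁻ x, ENNReal.ofReal (u x) ∂μ ≤ ENNReal.ofReal L :=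
    calc ∫⁻ x, ENNReal.ofReal (u x) ∂μ
        ≤ ∫⁻ x, liminf (fun i => ENNReal.ofReal (ψ i x)) l ∂μ := lintegral_mono_ae hpt
      _ ≤ liminf (fun i => ∫⁻ x, ENNReal.ofReal (ψ i x) ∂μ) l :=
        lintegral_liminf_le' fun i => (hψ i).aemeasurable.ennreal_ofReal
      _ = ENNReal.ofReal L := by
        refine Tendsto.liminf_eq ((ENNReal.tendsto_ofReal hL).congr fun i => ?_)
        exact ofReal_integral_eq_lintegral_ofReal (hψ i) (hψ_nonneg i)
  exact (integral_le_toReal_lintegral_ofReal u).trans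
    (ENNReal.toReal_le_of_le_ofReal hL_nonneg hlint)

end Fatou

theorem sub_le_integral_of_limsup_slope_le {g ρ f' : ℝ → ℝ} {a b h₀ : ℝ} (hg : Continuous g)
    (hab : a ≤ b) (hh₀ : 0 < h₀) (hρ : IntegrableOn ρ (Icc a b)) (hf' : IntegrableOn f' (Icc a b))
    (hdom : ∀ᵐ t ∂(volume.restrict (Icc a b)),
      ∀ h : ℝ, 0 < h → h ≤ h₀ → (g (t + h) - g t) / h ≤ ρ t)
    (hdini : ∀ᵐ t ∂(volume.restrict (Icc a b)),
      limsup (fun h : ℝ => (g (t + h) - g t) / h) (𝓝[>] 0) ≤ f' t) :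
    g b - g a ≤ ∫ t in a..b, f' t := by
  obtain ⟨δ, -, hδ_mem, hδ_zero⟩ := exists_seq_strictAnti_tendsto' hh₀
  have hδ : Tendsto δ atTop (𝓝[>] 0) :=
    tendsto_nhdsWithin_iff.2 ⟨hδ_zero, .of_forall fun k => (hδ_mem k).1⟩
  set q : ℝ → ℝ → ℝ := fun h t => (g (t + h) - g t) / h
  have hq : ∀ h, Continuous (q h) := fun h =>
    ((hg.comp (continuous_add_const h)).sub hg).div_const h
  have hq_int : Tendsto (fun k => ∫ t in Icc a b, q (δ k) t) atTop (𝓝 (g b - g a)) := by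
    simp only [integral_Icc_eq_integral_Ioc, ← intervalIntegral.integral_of_le hab]
    exact (hg.tendsto_intervalIntegral_slope a b).comp (hδ.mono_right (nhdsGT_le_nhdsNE 0))
  have hpt : ∀ᵐ t ∂(volume.restrict (Icc a b)),
      ∀ c < ρ t - f' t, ∀ᶠ k in atTop, c < ρ t - q (δ k) t := by
    filter_upwards [hdom, hdini] with t hdom_t hdini_t c hc
    have hbdd : IsBoundedUnder (· ≤ ·) (𝓝[>] 0) (fun h => q h t) :=
      ⟨ρ t, eventually_map.2 <|
        mem_of_superset (Ioc_mem_nhdsGT hh₀) fun h hh => hdom_t h hh.1 hh.2⟩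
    have hlt : ∀ᶠ h in 𝓝[>] 0, q h t < ρ t - c :=
      eventually_lt_of_limsup_lt (hdini_t.trans_lt (by linarith)) hbdd
    filter_upwards [hδ.eventually hlt] with k hk
    linarith
  have hfatou : ∫ t in Icc a b, ρ t - f' t ≤ (∫ t in Icc a b, ρ t) - (g b - g a) :=
    integral_le_of_le_liminf_of_tendsto_integral (ψ := fun k t => ρ t - q (δ k) t)
      (fun k => hρ.sub (hq _).integrableOn_Icc)
      (fun k => hdom.mono fun t ht => sub_nonneg.2 (ht _ (hδ_mem k).1 (hδ_mem k).2.le)) hpt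
      (by simpa only [integral_sub hρ (hq _).integrableOn_Icc] using
        tendsto_const_nhds.sub hq_int)
  rw [integral_sub hρ hf'] at hfatou
  rw [intervalIntegral.integral_of_le hab, ← integral_Icc_eq_integral_Ioc]
  linarith

theorem verification_comparison_step_general {n : ℕ} (T : ℝ) (hT : 0 < T)
    (v : ℝ → EuclideanSpace ℝ (Fin n) → ℝ)
    (xstar : ℝ → EuclideanSpace ℝ (Fin n))
    (g : ℝ → ℝ)
    (hgdef : ∀ t ∈ Icc (0:ℝ) T, g t = v t (xstar t))
    (hext_top : ∀ t : ℝ, T < t → g t = g T)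
    (hext_bot : ∀ t : ℝ, t < 0 → g t = g 0)
    (hgcont : ContinuousOn g (Icc 0 T))
    (ρ : ℝ → ℝ) (hρ : IntegrableOn ρ (Icc 0 T))
    (h0 : ℝ) (hh0 : 0 < h0)
    (hdom : ∀ᵐ t ∂(volume.restrict (Icc 0 T)),
      ∀ h : ℝ, 0 < h → h ≤ h0 → (g (t + h) - g t) / h ≤ ρ t)
    (s : ℝ) (hs : 0 ≤ s) (hsT : s ≤ T)
    (f : ℝ → ℝ) (hf : IntegrableOn f (Icc s T))
    (hdini : ∀ᵐ t ∂(volume.restrict (Icc s T)),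
      Filter.limsup (fun h : ℝ => (g (t + h) - g t) / h) (nhdsWithin 0 (Ioi 0)) ≤ -f t) :
    v T (xstar T) + ∫ t in s..T, f t ≤ v s (xstar s) := by
  have hg : Continuous g :=
    continuous_of_continuousOn_Icc_of_eq_endpoints hT.le hgcont hext_bot hext_top
  have hsub : Icc s T ⊆ Icc 0 T := Icc_subset_Icc_left hs
  have hcomp := sub_le_integral_of_limsup_slope_le (f' := fun t => -f t) hg hsT hh0
    (hρ.mono_set hsub) hf.neg (ae_restrict_of_ae_restrict_of_subset hsub hdom) hdini
  rw [intervalIntegral.integral_neg] at hcomp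
  rw [← hgdef s ⟨hs, hsT⟩, ← hgdef T ⟨hT.le, le_rfl⟩]
  linarith

/-- Deterministic comparison step of the verification theorem: if
`g(t) = v(t, x*(t))` on `[0,T]` (extended constantly outside), the right
difference quotients of `g` are dominated by an integrable `ρ`, and the upper
right Dini derivative of `g` is `≤ -f(t)` a.e. on `[s,T]` with `f ∈ L¹(s,T)`,
then `v(s,x*(s)) ≥ v(T,x*(T)) + ∫_s^T f`. -/
theorem verification_comparison_step {n : ℕ} (T : ℝ) (hT : 0 < T)
    (v : ℝ → EuclideanSpace ℝ (Fin n) → ℝ)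
    (hv : Continuous fun p : ℝ × EuclideanSpace ℝ (Fin n) => v p.1 p.2)
    (xstar : ℝ → EuclideanSpace ℝ (Fin n)) (hx : Continuous xstar)
    (g : ℝ → ℝ)
    (hgdef : ∀ t ∈ Icc (0:ℝ) T, g t = v t (xstar t))
    (hext_top : ∀ t : ℝ, T < t → g t = g T)
    (hext_bot : ∀ t : ℝ, t < 0 → g t = g 0)
    (hgcont : ContinuousOn g (Icc 0 T))
    (ρ : ℝ → ℝ) (hρ : IntegrableOn ρ (Icc 0 T))
    (h0 : ℝ) (hh0 : 0 < h0)
    (hdom : ∀ᵐ t ∂(volume.restrict (Icc 0 T)),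
      ∀ h : ℝ, 0 < h → h ≤ h0 → (g (t + h) - g t) / h ≤ ρ t)
    (s : ℝ) (hs : 0 ≤ s) (hsT : s ≤ T)
    (f : ℝ → ℝ) (hf : IntegrableOn f (Icc s T))
    (hdini : ∀ᵐ t ∂(volume.restrict (Icc s T)),
      Filter.limsup (fun h : ℝ => (g (t + h) - g t) / h) (nhdsWithin 0 (Ioi 0)) ≤ -f t) :
    v T (xstar T) + ∫ t in s..T, f t ≤ v s (xstar s) :=
  verification_comparison_step_general T hT v xstar g hgdef hext_top hext_bot hgcont ρ hρ h0 hh0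
    hdom s hs hsT f hf hdini
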